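/- arXiv:1410.8106 — 5 statements merged into one kernel-verified Lean document; each statement's English description precedes it below -/
import Mathlib

section
/- For k ∈ ℕ^d with power 𝔭 (the minimal p ≥ 0 with k ∈ [0,q^p)), and any n ≥ 𝔭, the carry set satisfies Card(Δ_n(k)) ≤ Q^n − ∏_{i=1}^d (q_i^n − q_i^𝔭), where Q = q_1⋯q_d. -/
/-- For `k ∈ ℕ^d` with power `p` (the minimal `p ≥ 0` with `k ∈ [0,q^p)`), and any `n ≥ p`,
the carry set satisfies `Card(Δ_n(k)) ≤ Q^n − ∏ᵢ (qᵢ^n − qᵢ^p)`, where `Q = q₁⋯q_d`. -/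
theorem stmt1 (d : ℕ) (q : Fin d → ℕ) (hq : ∀ i, 1 < q i) (k : Fin d → ℕ)
    (p : ℕ) (hp1 : ∀ i, k i < q i ^ p) (hp2 : ∀ p', (∀ i, k i < q i ^ p') → p ≤ p')
    (n : ℕ) (hn : p ≤ n) :
    Nat.card {j : Fin d → ℤ |
        (∀ i, 0 ≤ j i ∧ j i < (q i : ℤ) ^ n) ∧
        ∃ i, Int.ediv (j i + (k i : ℤ)) ((q i : ℤ) ^ n) ≠ 0}
      ≤ (∏ i, q i ^ n) - ∏ i, (q i ^ n - q i ^ p) := by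
  classical
  set box : Finset (Fin d → ℕ) := Fintype.piFinset fun i => Finset.range (q i ^ n) with hbox
  set good : Finset (Fin d → ℕ) :=
    Fintype.piFinset fun i => Finset.range (q i ^ n - k i) with hgood
  have hsub : good ⊆ box := by
    intro x hx
    simp only [hgood, hbox, Fintype.mem_piFinset, Finset.mem_range] at hx ⊢
    intro i
    exact lt_of_lt_of_le (hx i) (Nat.sub_le _ _)
  -- injection from the set into box \ good
  have key : ∀ j : Fin d → ℤ, j ∈ {j : Fin d → ℤ |
        (∀ i, 0 ≤ j i ∧ j i < (q i : ℤ) ^ n) ∧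
        ∃ i, Int.ediv (j i + (k i : ℤ)) ((q i : ℤ) ^ n) ≠ 0} →
      (fun i => (j i).toNat) ∈ box \ good := by
    intro j hj
    obtain ⟨hb, i, hi⟩ := hj
    have hq0 : ∀ i, (0:ℤ) < (q i : ℤ) ^ n := fun i =>
      pow_pos (by exact_mod_cast (hq i).trans' one_pos) n
    simp only [Finset.mem_sdiff, hbox, hgood, Fintype.mem_piFinset, Finset.mem_range]
    constructor
    · intro i'
      have := (hb i').2
      have h0 := (hb i').1
      have : ((j i').toNat : ℤ) < ((q i' ^ n : ℕ) : ℤ) := by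
        rw [Int.toNat_of_nonneg h0]; push_cast; exact (hb i').2
      exact_mod_cast this
    · intro hcon
      apply hi
      have h0 : 0 ≤ j i + (k i : ℤ) := add_nonneg (hb i).1 (by positivity)
      have hlt : j i + (k i : ℤ) < (q i : ℤ) ^ n := by
        have hc := hcon i
        have hki : k i < q i ^ n := lt_of_lt_of_le (hp1 i)
          (Nat.pow_le_pow_right (le_of_lt (hq i)) hn)
        have : (j i).toNat + k i < q i ^ n := by omega
        have h2 : ((j i).toNat : ℤ) + (k i : ℤ) < ((q i ^ n : ℕ) : ℤ) := by exact_mod_cast this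
        rw [Int.toNat_of_nonneg (hb i).1] at h2
        calc j i + (k i : ℤ) < ((q i ^ n : ℕ) : ℤ) := h2
          _ = (q i : ℤ) ^ n := by push_cast; ring
      exact Int.ediv_eq_zero_of_lt h0 hlt
  have hinj : Set.InjOn (fun (j : Fin d → ℤ) => (fun i => (j i).toNat)) {j : Fin d → ℤ |
        (∀ i, 0 ≤ j i ∧ j i < (q i : ℤ) ^ n) ∧
        ∃ i, Int.ediv (j i + (k i : ℤ)) ((q i : ℤ) ^ n) ≠ 0} := by
    intro a ha b hb hab
    funext i
    have := congrFun hab i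
    simp only at this
    have := congrArg (fun x : ℕ => (x : ℤ)) this
    simpa [Int.toNat_of_nonneg (ha.1 i).1, Int.toNat_of_nonneg (hb.1 i).1] using this
  have hmaps : Set.MapsTo (fun (j : Fin d → ℤ) => (fun i => (j i).toNat))
      {j : Fin d → ℤ |
        (∀ i, 0 ≤ j i ∧ j i < (q i : ℤ) ^ n) ∧
        ∃ i, Int.ediv (j i + (k i : ℤ)) ((q i : ℤ) ^ n) ≠ 0}
      ((box \ good : Finset (Fin d → ℕ)) : Set (Fin d → ℕ)) := fun j hj => key j hj
  have hcard : Nat.card {j : Fin d → ℤ |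
        (∀ i, 0 ≤ j i ∧ j i < (q i : ℤ) ^ n) ∧
        ∃ i, Int.ediv (j i + (k i : ℤ)) ((q i : ℤ) ^ n) ≠ 0}
      ≤ (box \ good).card := by
    have hfin : ((box \ good : Finset (Fin d → ℕ)) : Set (Fin d → ℕ)).Finite :=
      (box \ good).finite_toSet
    rw [Nat.card_coe_set_eq, ← Set.ncard_coe_finset]
    exact Set.ncard_le_ncard_of_injOn _ hmaps hinj hfin
  refine hcard.trans ?_
  rw [Finset.card_sdiff_of_subset hsub]
  have hbc : box.card = ∏ i, q i ^ n := by
    simp [hbox, Fintype.card_piFinset]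
  have hgc : good.card = ∏ i, (q i ^ n - k i) := by
    simp [hgood, Fintype.card_piFinset]
  rw [hbc, hgc]
  apply Nat.sub_le_sub_left
  apply Finset.prod_le_prod'
  intro i _
  exact Nat.sub_le_sub_left (le_of_lt (hp1 i)) _
end

section
/- If ρ is a q-shift invariant complex Borel measure on 𝕋^d, then Π(ρ) = ω_q ∗ ρ, where Π = Σ_{n≥1} 2^{-n} π^n for the invariant contracted map π, and ω_q = Σ_{n≥1} 2^{-n} ν_{q^n} is the q-adic support measure. -/
open MeasureTheory
open scoped Classical

/-- The real part of a complex measure, as a signed measure. -/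
noncomputable def cmRe {X : Type*} [MeasurableSpace X] (ν : ComplexMeasure X) :
    SignedMeasure X :=
  ν.mapRange Complex.reLm.toAddMonoidHom Complex.continuous_re

/-- The imaginary part of a complex measure, as a signed measure. -/
noncomputable def cmIm {X : Type*} [MeasurableSpace X] (ν : ComplexMeasure X) :
    SignedMeasure X :=
  ν.mapRange Complex.imLm.toAddMonoidHom Complex.continuous_im

/-- Integration of a complex-valued function against a complex measure. -/
noncomputable def cIntegral {X : Type*} [MeasurableSpace X]
    (ν : ComplexMeasure X) (f : X → ℂ) : ℂ :=
  ((∫ x, f x ∂(cmRe ν).toJordanDecomposition.posPart) -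
      (∫ x, f x ∂(cmRe ν).toJordanDecomposition.negPart)) +
    Complex.I *
      ((∫ x, f x ∂(cmIm ν).toJordanDecomposition.posPart) -
        (∫ x, f x ∂(cmIm ν).toJordanDecomposition.negPart))

/-- The Fourier coefficient `ν̂(k)` of a complex measure on the `d`-torus. -/
noncomputable def cmFourier {d : ℕ} (ν : ComplexMeasure (Fin d → AddCircle (1 : ℝ)))
    (k : Fin d → ℤ) : ℂ :=
  cIntegral ν fun x => ∏ i, fourier (-(k i)) (x i)

/-! Pushing `ρ` forward along `x ↦ q • x` multiplies the frequency variable of `ρ̂` by `q`, by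
the change of variables formula applied to each part of the Jordan decompositions of the real
and imaginary parts of `ρ`. So `q`-shift invariance gives `ρ̂(q ^ n • a) = ρ̂(a)`, and the two
series agree term by term: where `q ^ (n + 1) ∣ k`, `ρ̂(k / q ^ (n + 1)) = ρ̂(k)`. -/

variable {X Y : Type*} [MeasurableSpace X] [MeasurableSpace Y]

namespace MeasureTheory

theorem VectorMeasure.mapRange_map {M N : Type*} [AddCommMonoid M] [TopologicalSpace M]
    [AddCommMonoid N] [TopologicalSpace N] (v : VectorMeasure X M) (f : M →+ N)
    (hf : Continuous f) (T : X → Y) :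
    (v.map T).mapRange f hf = (v.mapRange f hf).map T := by
  by_cases hT : Measurable T
  · ext s hs
    simp only [VectorMeasure.mapRange_apply, VectorMeasure.map_apply _ hT hs]
  · simp only [VectorMeasure.map_not_measurable _ hT, VectorMeasure.mapRange_zero]

theorem VectorMeasure.map_sub {M : Type*} [AddCommGroup M] [TopologicalSpace M]
    [IsTopologicalAddGroup M] (u v : VectorMeasure X M) (T : X → Y) :
    (u - v).map T = u.map T - v.map T :=
  _root_.map_sub (VectorMeasure.mapGm T) u v

theorem Measure.toSignedMeasure_map (μ : Measure X) [IsFiniteMeasure μ] {T : X → Y}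
    (hT : Measurable T) : (μ.map T).toSignedMeasure = μ.toSignedMeasure.map T := by
  ext s hs
  rw [VectorMeasure.map_apply _ hT hs, Measure.toSignedMeasure_apply_measurable hs,
    Measure.toSignedMeasure_apply_measurable (hT hs), map_measureReal_apply hT hs]

end MeasureTheory

theorem cmRe_map (ν : ComplexMeasure X) (T : X → Y) : cmRe (ν.map T) = (cmRe ν).map T :=
  VectorMeasure.mapRange_map _ _ _ _

theorem cmIm_map (ν : ComplexMeasure X) (T : X → Y) : cmIm (ν.map T) = (cmIm ν).map T :=
  VectorMeasure.mapRange_map _ _ _ _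

section Integral

variable {E : Type*} [NormedAddCommGroup E] [NormedSpace ℝ E]

theorem integral_sub_eq_of_toSignedMeasure_sub_eq {μ₁ ν₁ μ₂ ν₂ : Measure X}
    [IsFiniteMeasure μ₁] [IsFiniteMeasure ν₁] [IsFiniteMeasure μ₂] [IsFiniteMeasure ν₂]
    {f : X → E} (hμ₁ : Integrable f μ₁) (hν₁ : Integrable f ν₁) (hμ₂ : Integrable f μ₂)
    (hν₂ : Integrable f ν₂)
    (h : μ₁.toSignedMeasure - ν₁.toSignedMeasure = μ₂.toSignedMeasure - ν₂.toSignedMeasure) :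
    ∫ x, f x ∂μ₁ - ∫ x, f x ∂ν₁ = ∫ x, f x ∂μ₂ - ∫ x, f x ∂ν₂ := by
  have hsum : μ₁ + ν₂ = μ₂ + ν₁ := by
    rw [← Measure.toSignedMeasure_eq_toSignedMeasure_iff, Measure.toSignedMeasure_add,
      Measure.toSignedMeasure_add]
    exact sub_eq_sub_iff_add_eq_add.mp h
  have := congrArg (fun μ => ∫ x, f x ∂μ) hsum
  simp only [integral_add_measure hμ₁ hν₂, integral_add_measure hμ₂ hν₁] at this
  rw [sub_eq_sub_iff_add_eq_add, this]

variable [TopologicalSpace Y] [CompactSpace Y] [OpensMeasurableSpace Y]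
  [SecondCountableTopologyEither Y E]

theorem SignedMeasure.integral_toJordanDecomposition_map (s : SignedMeasure X) {T : X → Y}
    (hT : Measurable T) {f : Y → E} (hf : Continuous f) :
    ∫ y, f y ∂(SignedMeasure.toJordanDecomposition (s.map T)).posPart -
        ∫ y, f y ∂(SignedMeasure.toJordanDecomposition (s.map T)).negPart =
      ∫ x, f (T x) ∂s.toJordanDecomposition.posPart -
        ∫ x, f (T x) ∂s.toJordanDecomposition.negPart := by
  have hint (μ : Measure Y) [IsFiniteMeasure μ] : Integrable f μ :=
    hf.integrable_of_hasCompactSupport (HasCompactSupport.of_compactSpace f)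
  rw [← integral_map hT.aemeasurable hf.aestronglyMeasurable,
    ← integral_map hT.aemeasurable hf.aestronglyMeasurable]
  refine integral_sub_eq_of_toSignedMeasure_sub_eq (hint _) (hint _) (hint _) (hint _) ?_
  rw [Measure.toSignedMeasure_map _ hT, Measure.toSignedMeasure_map _ hT, ← VectorMeasure.map_sub]
  exact (SignedMeasure.toSignedMeasure_toJordanDecomposition (s.map T)).trans
    (congrArg (·.map T) s.toSignedMeasure_toJordanDecomposition.symm)

theorem cIntegral_map (ν : ComplexMeasure X) {T : X → Y} (hT : Measurable T)
    {f : Y → ℂ} (hf : Continuous f) :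
    cIntegral (ν.map T) f = cIntegral ν (fun x => f (T x)) := by
  rw [cIntegral, cIntegral, cmRe_map, cmIm_map, SignedMeasure.integral_toJordanDecomposition_map _ hT hf,
    SignedMeasure.integral_toJordanDecomposition_map _ hT hf]

end Integral

theorem fourier_nsmul (m : ℤ) (c : ℕ) (x : AddCircle (1 : ℝ)) :
    fourier m (c • x) = fourier (c * m) x := by
  rw [fourier_apply, fourier_apply, ← natCast_zsmul, smul_smul, mul_comm]

section ShiftInvariant

variable {d : ℕ} (q : Fin d → ℕ) {ρ : ComplexMeasure (Fin d → AddCircle (1 : ℝ))}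

theorem cmFourier_map_nsmul (a : Fin d → ℤ) :
    cmFourier (ρ.map fun x i => q i • x i) a = cmFourier ρ fun i => (q i : ℤ) * a i := by
  have hT : Measurable (fun x i => q i • x i :
      (Fin d → AddCircle (1 : ℝ)) → Fin d → AddCircle (1 : ℝ)) :=
    (continuous_pi fun i => (continuous_apply i).nsmul (q i)).measurable
  have hf : Continuous fun x : Fin d → AddCircle (1 : ℝ) => ∏ i, fourier (-(a i)) (x i) :=
    continuous_finsetProd _ fun i _ => (map_continuous _).comp (continuous_apply i)
  simp only [cmFourier, cIntegral_map _ hT hf, fourier_nsmul, mul_neg]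

variable {q}

theorem cmFourier_pow_mul_of_map_eq
    (hρ : ρ.map (fun x i => q i • x i :
        (Fin d → AddCircle (1 : ℝ)) → Fin d → AddCircle (1 : ℝ)) = ρ)
    (m : ℕ) (a : Fin d → ℤ) :
    cmFourier ρ (fun i => (q i : ℤ) ^ m * a i) = cmFourier ρ a := by
  induction m with
  | zero => simp
  | succ n ih =>
    simp only [pow_succ', mul_assoc]
    rw [← cmFourier_map_nsmul, hρ, ih]

end ShiftInvariant

/-- `Π(ρ) = ω_q ∗ ρ` read on Fourier coefficients, with `(π^n ρ)^(k) = ρ̂(k/q^n)` if `q^n ∣ k`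
and `0` otherwise, and `ω̂_q(k) = Σ_{n≥1} 2^{-n} 1_{q^n ∣ k}`. -/
theorem stmt10_general (d : ℕ) (q : Fin d → ℕ)
    (ρ : ComplexMeasure (Fin d → AddCircle (1 : ℝ)))
    (hρ : ρ.map (fun x i => q i • x i :
        (Fin d → AddCircle (1 : ℝ)) → Fin d → AddCircle (1 : ℝ)) = ρ)
    (k : Fin d → ℤ) :
    (∑' n : ℕ, (1 / 2 : ℂ) ^ (n + 1) *
        (if ∀ i, (q i : ℤ) ^ (n + 1) ∣ k i
          then cmFourier ρ fun i => Int.ediv (k i) ((q i : ℤ) ^ (n + 1)) else 0)) =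
      (∑' n : ℕ, if ∀ i, (q i : ℤ) ^ (n + 1) ∣ k i then (1 / 2 : ℂ) ^ (n + 1) else 0) *
        cmFourier ρ k := by
  rw [← tsum_mul_right]
  refine tsum_congr fun n => ?_
  split_ifs with hdvd
  · have hk : (fun i => (q i : ℤ) ^ (n + 1) * (k i).ediv ((q i : ℤ) ^ (n + 1))) = k :=
      funext fun i => Int.mul_ediv_cancel' (hdvd i)
    rw [← cmFourier_pow_mul_of_map_eq hρ (n + 1), hk]
  · rw [mul_zero, zero_mul]

/-- If `ρ` is a `q`-shift invariant complex Borel measure on the `d`-torus, then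
`Π(ρ) = ω_q ∗ ρ`, expressed on Fourier coefficients: for every `k`,
`Σ_{n≥1} 2^{-n} (π^n ρ)^(k) = ω̂_q(k)·ρ̂(k)`, where `(π^n ρ)^(k) = ρ̂(k/q^n)` if `q^n ∣ k`
and `0` otherwise, and `ω̂_q(k) = Σ_{n≥1} 2^{-n} 1_{q^n ∣ k}`. -/
theorem stmt10 (d : ℕ) (q : Fin d → ℕ) (hq : ∀ i, 1 < q i)
    (ρ : ComplexMeasure (Fin d → AddCircle (1 : ℝ)))
    (hρ : ρ.map (fun x i => q i • x i :
        (Fin d → AddCircle (1 : ℝ)) → Fin d → AddCircle (1 : ℝ)) = ρ)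
    (k : Fin d → ℤ) :
    (∑' n : ℕ, (1 / 2 : ℂ) ^ (n + 1) *
        (if ∀ i, (q i : ℤ) ^ (n + 1) ∣ k i
          then cmFourier ρ fun i => Int.ediv (k i) ((q i : ℤ) ^ (n + 1)) else 0)) =
      (∑' n : ℕ, if ∀ i, (q i : ℤ) ^ (n + 1) ∣ k i then (1 / 2 : ℂ) ^ (n + 1) else 0) *
        cmFourier ρ k :=
  stmt10_general d q ρ hρ k
end

section
/- If a continuous linear functional F on the space of finite complex Borel measures M(X) acts invariantly on measures μ and ν with distinct eigenvalues F_μ ≠ F_ν (meaning F·μ = F_μ μ and F·ν = F_ν ν), then μ and ν are mutually singular. -/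
open MeasureTheory

/-- A total variation measure for a complex measure (equivalent to the usual one). -/
noncomputable def tvOf {X : Type*} [MeasurableSpace X] (ν : ComplexMeasure X) : Measure X :=
  (cmRe ν).totalVariation + (cmIm ν).totalVariation

/-!
Lebesgue-decompose `|ν|` with respect to `|μ|` and let `S` carry the absolutely continuous
part, so that `|μ| Sᶜ = 0`. The total variation of `ν|_S` is `|ν|` restricted to `S`, hence
absolutely continuous with respect to both `|μ|` and `|ν|`. Compatibility of the localizations
then makes `F` act on `ν|_S` with both eigenvalues `F_μ ≠ F_ν`, which forces `ν|_S = 0`; so `Sᶜ`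
separates `|μ|` from `|ν|`.
-/

theorem MeasureTheory.SignedMeasure.totalVariation_restrict {X : Type*} [MeasurableSpace X]
    (s : SignedMeasure X) {S : Set X} (hS : MeasurableSet S) :
    totalVariation (s.restrict S) = s.totalVariation.restrict S := by
  rw [totalVariation_eq_variation, totalVariation_eq_variation, VectorMeasure.variation_restrict hS]

theorem MeasureTheory.VectorMeasure.mapRange_restrict {X M N : Type*} [MeasurableSpace X]
    [AddCommMonoid M] [TopologicalSpace M] [AddCommMonoid N] [TopologicalSpace N]
    (v : VectorMeasure X M) (f : M →+ N) (hf : Continuous f) {S : Set X} (hS : MeasurableSet S) :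
    (v.restrict S).mapRange f hf = (v.mapRange f hf).restrict S := by
  ext t ht
  simp only [mapRange_apply, restrict_apply _ hS ht]

theorem MeasureTheory.Measure.exists_restrict_absolutelyContinuous {X : Type*}
    [MeasurableSpace X] (η τ : Measure X) [η.HaveLebesgueDecomposition τ] :
    ∃ S, MeasurableSet S ∧ τ Sᶜ = 0 ∧ η.restrict S ≪ τ := by
  obtain ⟨S, hS, hsing, hτ⟩ := η.mutuallySingular_singularPart τ
  refine ⟨S, hS, hτ, ?_⟩
  rw [η.haveLebesgueDecomposition_add τ, restrict_add, restrict_eq_zero.2 hsing, zero_add]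
  exact (absolutelyContinuous_of_le restrict_le_self).trans (withDensity_absolutelyContinuous τ _)

theorem MeasureTheory.Measure.eq_zero_of_ae_eq_const_of_ne {X ι : Type*} [MeasurableSpace X]
    {ρ : Measure X} {a b : ι} (h : (fun _ => a) =ᵐ[ρ] fun _ => b) (hab : a ≠ b) : ρ = 0 := by
  by_contra hρ
  have := ae_neBot.2 hρ
  exact hab (Filter.eventually_const.1 h)

section ComplexMeasure

variable {X : Type*} [MeasurableSpace X]

instance isFiniteMeasure_tvOf (ν : ComplexMeasure X) : IsFiniteMeasure (tvOf ν) := by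
  unfold tvOf
  infer_instance

theorem cmRe_restrict (ν : ComplexMeasure X) {S : Set X} (hS : MeasurableSet S) :
    cmRe (ν.restrict S) = (cmRe ν).restrict S :=
  VectorMeasure.mapRange_restrict _ _ _ hS

theorem cmIm_restrict (ν : ComplexMeasure X) {S : Set X} (hS : MeasurableSet S) :
    cmIm (ν.restrict S) = (cmIm ν).restrict S :=
  VectorMeasure.mapRange_restrict _ _ _ hS

theorem tvOf_restrict (ν : ComplexMeasure X) {S : Set X} (hS : MeasurableSet S) :
    tvOf (ν.restrict S) = (tvOf ν).restrict S := by
  rw [tvOf, tvOf, cmRe_restrict ν hS, cmIm_restrict ν hS,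
    SignedMeasure.totalVariation_restrict _ hS, SignedMeasure.totalVariation_restrict _ hS,
    Measure.restrict_add]

theorem ae_eq_const_of_absolutelyContinuous {g : ComplexMeasure X → X → ℂ}
    (hg : ∀ ρ σ : ComplexMeasure X, tvOf σ ≪ tvOf ρ → g ρ =ᵐ[tvOf σ] g σ)
    {μ σ : ComplexMeasure X} {c : ℂ} (hμ : g μ =ᵐ[tvOf μ] fun _ => c) (hσμ : tvOf σ ≪ tvOf μ) :
    g σ =ᵐ[tvOf σ] fun _ => c :=
  (hg μ σ hσμ).symm.trans (hσμ.ae_le hμ)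

end ComplexMeasure

/-- `g ρ` stands for the localization `∂_ρ* F` of `F` at `ρ` provided by Šreider's theorem, and
`tvOf ρ` for `|ρ|`. -/
theorem stmt15_general {X : Type*} [MeasurableSpace X]
    (g : ComplexMeasure X → X → ℂ)
    (hg : ∀ ρ σ : ComplexMeasure X, tvOf σ ≪ tvOf ρ → g ρ =ᵐ[tvOf σ] g σ)
    (μ ν : ComplexMeasure X) (cμ cν : ℂ)
    (hμ : g μ =ᵐ[tvOf μ] fun _ => cμ) (hν : g ν =ᵐ[tvOf ν] fun _ => cν)
    (hne : cμ ≠ cν) :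
    tvOf μ ⟂ₘ tvOf ν := by
  obtain ⟨S, hS, hμS, hνSμ⟩ := (tvOf ν).exists_restrict_absolutelyContinuous (tvOf μ)
  have hνSν : (tvOf ν).restrict S ≪ tvOf ν :=
    Measure.absolutelyContinuous_of_le Measure.restrict_le_self
  rw [← tvOf_restrict ν hS] at hνSμ hνSν
  have hνS : tvOf ν S = 0 := by
    rw [← Measure.restrict_eq_zero, ← tvOf_restrict ν hS]
    exact Measure.eq_zero_of_ae_eq_const_of_ne
      ((ae_eq_const_of_absolutelyContinuous hg hμ hνSμ).symm.trans
        (ae_eq_const_of_absolutelyContinuous hg hν hνSν)) hne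
  exact ⟨Sᶜ, hS.compl, hμS, by rwa [compl_compl]⟩

/-- If a continuous linear functional on `M(X)` — encoded, via Šreider's theorem, by its
generalized functional `g`, assigning to each measure `ρ` its localized density `g ρ`,
compatibly with absolute continuity — acts invariantly on `μ` and `ν` with distinct
eigenvalues `cμ ≠ cν`, then `μ` and `ν` are mutually singular. -/
theorem stmt15 {X : Type*} [MetricSpace X] [CompactSpace X] [MeasurableSpace X] [BorelSpace X]
    (g : ComplexMeasure X → X → ℂ)
    (hg : ∀ ρ σ : ComplexMeasure X, tvOf σ ≪ tvOf ρ → g ρ =ᵐ[tvOf σ] g σ)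
    (μ ν : ComplexMeasure X) (cμ cν : ℂ)
    (hμ : g μ =ᵐ[tvOf μ] fun _ => cμ) (hν : g ν =ᵐ[tvOf ν] fun _ => cν)
    (hne : cμ ≠ cν) :
    tvOf μ ⟂ₘ tvOf ν :=
  stmt15_general g hg μ ν cμ cν hμ hν hne
end

section
/- For C ∈ M_{𝒜²}(ℂ) in block lower-triangular form with primitive Q-column-stochastic diagonal blocks C_{1,1},…,C_{J,J} on the ergodic classes and a transient block C_{𝒯,𝒯} of spectral radius strictly less than Q, the matrix Q·I − C_𝒯ᵗ is invertible, and a vector v satisfies Cᵗv = Qv if and only if v = V_ℰ − (Q·I − C_𝒯ᵗ)^{-1}(Q·I − Cᵗ)V_ℰ for some choice of constants w_1,…,w_J ∈ ℂ, where V_ℰ is the vector constant equal to w_j on ergodic class ℰ_j and zero on the transient part. -/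
/-- Sum over a subtype versus an `ite` sum over the ambient type. -/
lemma sum_ite_subtype {ι : Type*} [Fintype ι] {M : Type*} [AddCommMonoid M]
    (p : ι → Prop) [DecidablePred p] (f : ι → M) :
    ∑ y, (if p y then f y else 0) = ∑ b : Subtype p, f b.1 := by
  rw [← Finset.sum_filter]
  exact Finset.sum_subtype _ (by simp) f

/-- Powers of a matrix applied to an eigenvector. -/
lemma pow_mulVec_eig {n : Type*} [Fintype n] [DecidableEq n] {R : Type*} [CommRing R]
    (B : Matrix n n R) (q : R) (u : n → R) (hu : B.mulVec u = q • u) (k : ℕ) :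
    (B ^ k).mulVec u = q ^ k • u := by
  induction k with
  | zero => simp [Matrix.one_mulVec]
  | succ k ih =>
      rw [pow_succ, ← Matrix.mulVec_mulVec, hu, Matrix.mulVec_smul, ih, pow_succ, smul_smul,
        mul_comm]

/-- Perron–Frobenius type constancy: a real eigenvector for the eigenvalue `Q` of a
primitive matrix with constant row sums `Q` is constant. -/
lemma perron_const_real {n : Type*} [Fintype n] [DecidableEq n]
    (B : Matrix n n ℝ) (Q : ℝ) (hQ : 0 < Q)
    (hprim : ∃ m : ℕ, 0 < m ∧ ∀ x y, 0 < (B ^ m) x y)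
    (hrow : ∀ x, ∑ y, B x y = Q)
    (u : n → ℝ) (hu : B.mulVec u = Q • u) : ∀ x y, u x = u y := by
  intro x y
  obtain ⟨m, -, hm⟩ := hprim
  have hEig : (B ^ m).mulVec u = Q ^ m • u := pow_mulVec_eig B Q u hu m
  have hOne : B.mulVec (fun _ => (1 : ℝ)) = Q • (fun _ => (1 : ℝ)) := by
    funext z
    simp [Matrix.mulVec, dotProduct, hrow z]
  have hrowm : ∀ z, ∑ w, (B ^ m) z w = Q ^ m := by
    intro z
    have := congrFun (pow_mulVec_eig B Q (fun _ => (1 : ℝ)) hOne m) z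
    simpa [Matrix.mulVec, dotProduct] using this
  -- take a maximizer of u
  have hne : (Finset.univ : Finset n).Nonempty := ⟨x, Finset.mem_univ x⟩
  obtain ⟨x₀, -, hx₀⟩ := Finset.exists_max_image Finset.univ u hne
  have hmax : ∀ z, u z ≤ u x₀ := fun z => hx₀ z (Finset.mem_univ z)
  have hsum0 : ∑ z, (B ^ m) x₀ z * (u x₀ - u z) = 0 := by
    have h1 : ∑ z, (B ^ m) x₀ z * u z = Q ^ m * u x₀ := by
      have := congrFun hEig x₀
      simpa [Matrix.mulVec, dotProduct] using this
    have h2 : ∑ z, (B ^ m) x₀ z * u x₀ = Q ^ m * u x₀ := by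
      rw [← Finset.sum_mul, hrowm x₀]
    calc ∑ z, (B ^ m) x₀ z * (u x₀ - u z)
        = (∑ z, (B ^ m) x₀ z * u x₀) - ∑ z, (B ^ m) x₀ z * u z := by
          rw [← Finset.sum_sub_distrib]; congr 1; funext z; ring
      _ = 0 := by rw [h1, h2, sub_self]
  have hterm : ∀ z ∈ Finset.univ, (B ^ m) x₀ z * (u x₀ - u z) = 0 := by
    rw [← Finset.sum_eq_zero_iff_of_nonneg]
    · exact hsum0
    · intro z _
      exact mul_nonneg (hm x₀ z).le (sub_nonneg.mpr (hmax z))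
  have hall : ∀ z, u z = u x₀ := by
    intro z
    have := hterm z (Finset.mem_univ z)
    have h' := (mul_eq_zero.mp this).resolve_left (hm x₀ z).ne'
    linarith [sub_eq_zero.mp h']
  rw [hall x, hall y]

/-- Complex version of the constancy lemma, via real and imaginary parts. -/
lemma perron_const_complex {n : Type*} [Fintype n] [DecidableEq n]
    (B : Matrix n n ℝ) (Q : ℝ) (hQ : 0 < Q)
    (hprim : ∃ m : ℕ, 0 < m ∧ ∀ x y, 0 < (B ^ m) x y)
    (hrow : ∀ x, ∑ y, B x y = Q)
    (u : n → ℂ)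
    (hu : (B.map (Complex.ofReal ·)).mulVec u = (Q : ℂ) • u) : ∀ x y, u x = u y := by
  have hre : B.mulVec (fun z => (u z).re) = Q • (fun z => (u z).re) := by
    funext z
    have := congrFun hu z
    have h := congrArg Complex.re this
    simpa [Matrix.mulVec, dotProduct, Matrix.map_apply, Complex.re_sum,
      Complex.re_ofReal_mul] using h
  have him : B.mulVec (fun z => (u z).im) = Q • (fun z => (u z).im) := by
    funext z
    have := congrFun hu z
    have h := congrArg Complex.im this
    simpa [Matrix.mulVec, dotProduct, Matrix.map_apply, Complex.im_sum,
      Complex.im_ofReal_mul] using h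
  intro x y
  have h1 := perron_const_real B Q hQ hprim hrow _ hre x y
  have h2 := perron_const_real B Q hQ hprim hrow _ him x y
  exact Complex.ext h1 h2

/-- For `C` (acting via `Cᵗ`) in block lower-triangular form with primitive `Q`-stochastic
diagonal blocks on the ergodic classes `ℰ₁,…,ℰ_J` and a transient block of spectral radius
strictly less than `Q`: the matrix `Q·I − C_𝒯ᵗ` is invertible, and `Cᵗv = Qv` iff
`v = V_ℰ − (Q·I − C_𝒯ᵗ)⁻¹(Q·I − Cᵗ)V_ℰ` for some constants `w₁,…,w_J ∈ ℂ`, where `V_ℰ`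
equals `w_j` on class `ℰ_j` and `0` on the transient part, and `C_𝒯ᵗ = Cᵗ P_𝒯`. -/
theorem stmt18 {ι : Type*} [Fintype ι] [DecidableEq ι] {J : ℕ}
    (cls : ι → Option (Fin J)) (Q : ℝ) (hQ : 0 < Q)
    (C : Matrix ι ι ℝ) (hpos : ∀ x y, 0 ≤ C x y)
    (hblock : ∀ (x y : ι) (j : Fin J), cls x = some j → cls y ≠ some j →
      C.transpose x y = 0)
    (hstoch : ∀ x : ι, cls x ≠ none → ∑ y, C.transpose x y = Q)
    (hprim : ∀ j : Fin J, ∃ m : ℕ, 0 < m ∧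
      ∀ x y : {z : ι // cls z = some j},
        0 < ((Matrix.of fun a b : {z : ι // cls z = some j} =>
          C.transpose a.1 b.1) ^ m) x y)
    (hspec : ∀ μ ∈ spectrum ℂ
        (Matrix.of fun a b : {z : ι // cls z = none} => (C.transpose a.1 b.1 : ℂ)),
      ‖μ‖ < Q) :
    IsUnit ((Q : ℂ) • (1 : Matrix ι ι ℂ) -
        (C.map (Complex.ofReal ·)).transpose *
          Matrix.diagonal fun x => if cls x = none then (1 : ℂ) else 0) ∧
      ∀ v : ι → ℂ,
        (C.map (Complex.ofReal ·)).transpose.mulVec v = (Q : ℂ) • v ↔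
          ∃ w : Fin J → ℂ,
            v = (fun x => (cls x).elim 0 w) -
              ((Q : ℂ) • (1 : Matrix ι ι ℂ) -
                  (C.map (Complex.ofReal ·)).transpose *
                    Matrix.diagonal fun x => if cls x = none then (1 : ℂ) else 0)⁻¹.mulVec
                (((Q : ℂ) • (1 : Matrix ι ι ℂ) -
                    (C.map (Complex.ofReal ·)).transpose).mulVec
                  fun x => (cls x).elim 0 w) := by
  classical
  set A : Matrix ι ι ℂ := (C.map (Complex.ofReal ·)).transpose with hAdef
  set D : Matrix ι ι ℂ := Matrix.diagonal fun x => if cls x = none then (1 : ℂ) else 0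
    with hDdef
  set M : Matrix ι ι ℂ := (Q : ℂ) • (1 : Matrix ι ι ℂ) - A * D with hMdef
  have hQC : (Q : ℂ) ≠ 0 := by exact_mod_cast hQ.ne'
  have hA : ∀ x y, A x y = ((C.transpose x y : ℝ) : ℂ) := by
    intro x y; simp [hAdef, Matrix.transpose_apply, Matrix.map_apply]
  have hAblock : ∀ (x y : ι) (j : Fin J), cls x = some j → cls y ≠ some j → A x y = 0 := by
    intro x y j hx hy
    rw [hA, hblock x y j hx hy, Complex.ofReal_zero]
  have hArow : ∀ (x : ι) (j : Fin J), cls x = some j → ∑ y, A x y = (Q : ℂ) := by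
    intro x j hx
    have h := hstoch x (by rw [hx]; exact Option.some_ne_none j)
    calc ∑ y, A x y = ∑ y, ((C.transpose x y : ℝ) : ℂ) := by
          exact Finset.sum_congr rfl fun y _ => hA x y
      _ = ((∑ y, C.transpose x y : ℝ) : ℂ) := by push_cast; ring
      _ = (Q : ℂ) := by rw [h]
  -- structure of `M.mulVec`
  have hMD : ∀ z : ι → ℂ, M.mulVec z =
      (Q : ℂ) • z - A.mulVec (fun y => if cls y = none then z y else 0) := by
    intro z
    have hDz : D.mulVec z = fun y => if cls y = none then z y else 0 := by
      funext y
      simp [hDdef, Matrix.mulVec_diagonal, ite_mul, one_mul, zero_mul]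
    rw [hMdef, Matrix.sub_mulVec, Matrix.smul_mulVec, Matrix.one_mulVec,
      ← Matrix.mulVec_mulVec, hDz]
  have hMerg : ∀ (z : ι → ℂ) (x : ι) (j : Fin J), cls x = some j →
      M.mulVec z x = (Q : ℂ) * z x := by
    intro z x j hx
    have h0 : A.mulVec (fun y => if cls y = none then z y else 0) x = 0 := by
      apply Finset.sum_eq_zero
      intro y _
      by_cases hy : cls y = none
      · have hz : A x y = 0 := hAblock x y j hx (by simp [hy])
        simp [hz]
      · simp [hy]
    rw [congrFun (hMD z) x]
    simp only [Pi.sub_apply, Pi.smul_apply, smul_eq_mul]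
    rw [show A.mulVec (fun y => if cls y = none then z y else 0) x = 0 from h0, sub_zero]
  -- the transient block is invertible at Q
  set Tmat : Matrix {z : ι // cls z = none} {z : ι // cls z = none} ℂ :=
    Matrix.of fun a b : {z : ι // cls z = none} => (C.transpose a.1 b.1 : ℂ) with hTdef
  have hTunit : IsUnit ((Q : ℂ) • (1 : Matrix {z : ι // cls z = none}
      {z : ι // cls z = none} ℂ) - Tmat) := by
    have hnot : (Q : ℂ) ∉ spectrum ℂ Tmat := by
      intro hmem
      have h := hspec _ hmem
      rw [Complex.norm_real, Real.norm_eq_abs, abs_of_pos hQ] at h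
      exact lt_irrefl Q h
    have := spectrum.notMem_iff.mp hnot
    rwa [Algebra.algebraMap_eq_smul_one] at this
  have hTA : ∀ a b : {z : ι // cls z = none}, Tmat a b = A a.1 b.1 := by
    intro a b; rw [hA]; rfl
  -- M is invertible
  have hMinj : Function.Injective M.mulVec := by
    have hTinj : Function.Injective ((Q : ℂ) • (1 : Matrix {z : ι // cls z = none}
        {z : ι // cls z = none} ℂ) - Tmat).mulVec :=
      Matrix.mulVec_injective_iff_isUnit.mpr hTunit
    intro z₁ z₂ h12
    have h0 : M.mulVec (z₁ - z₂) = 0 := by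
      rw [Matrix.mulVec_sub, h12, sub_self]
    set z := z₁ - z₂ with hzdef
    have hz_erg : ∀ (x : ι) (j : Fin J), cls x = some j → z x = 0 := by
      intro x j hx
      have := hMerg z x j hx
      rw [congrFun h0 x] at this
      exact (mul_eq_zero.mp this.symm).resolve_left hQC
    have hzT : ((Q : ℂ) • (1 : Matrix {z : ι // cls z = none}
        {z : ι // cls z = none} ℂ) - Tmat).mulVec (fun a => z a.1) = 0 := by
      funext a
      have hx := congrFun h0 a.1
      rw [congrFun (hMD z) a.1] at hx
      have hsum : A.mulVec (fun y => if cls y = none then z y else 0) a.1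
          = ∑ b : {z : ι // cls z = none}, Tmat a b * z b.1 := by
        unfold Matrix.mulVec dotProduct
        calc ∑ y, A a.1 y * (if cls y = none then z y else 0)
            = ∑ y, (if cls y = none then A a.1 y * z y else 0) := by
              apply Finset.sum_congr rfl; intro y _
              by_cases hy : cls y = none <;> simp [hy]
          _ = ∑ b : {z : ι // cls z = none}, A a.1 b.1 * z b.1 :=
              sum_ite_subtype _ _
          _ = ∑ b : {z : ι // cls z = none}, Tmat a b * z b.1 := by
              apply Finset.sum_congr rfl; intro b _; rw [hTA]
      simp only [Pi.sub_apply, Pi.smul_apply, smul_eq_mul] at hx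
      rw [hsum] at hx
      simp only [Matrix.sub_mulVec, Matrix.smul_mulVec, Matrix.one_mulVec,
        Pi.sub_apply, Pi.smul_apply, Pi.zero_apply, smul_eq_mul] at hx ⊢
      rw [show (Tmat.mulVec fun a => z a.1) a = ∑ b : {z : ι // cls z = none},
        Tmat a b * z b.1 from rfl]
      linear_combination hx
    have hz0 : (fun a : {z : ι // cls z = none} => z a.1) = 0 := by
      apply hTinj
      rw [hzT, Matrix.mulVec_zero]
    have : z = 0 := by
      funext x
      rcases hx : cls x with _ | j
      · exact congrFun hz0 ⟨x, hx⟩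
      · exact hz_erg x j hx
    exact sub_eq_zero.mp this
  have hMunit : IsUnit M := Matrix.mulVec_injective_iff_isUnit.mp hMinj
  have hMdet : IsUnit M.det := (Matrix.isUnit_iff_isUnit_det M).mp hMunit
  have hMinvM : M⁻¹ * M = 1 := Matrix.nonsing_inv_mul M hMdet
  have hMMinv : M * M⁻¹ = 1 := Matrix.mul_nonsing_inv M hMdet
  -- eigenvectors are constant on each ergodic class
  have hconst : ∀ v : ι → ℂ, A.mulVec v = (Q : ℂ) • v →
      ∀ (j : Fin J) (x y : ι), cls x = some j → cls y = some j → v x = v y := by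
    intro v hv j x y hx hy
    set S := {z : ι // cls z = some j}
    set B : Matrix S S ℝ := Matrix.of fun a b : S => C.transpose a.1 b.1 with hBdef
    have hrowB : ∀ a : S, ∑ b, B a b = Q := by
      intro a
      have hall := hstoch a.1 (by rw [a.2]; exact Option.some_ne_none j)
      calc ∑ b : S, B a b = ∑ y, (if cls y = some j then C.transpose a.1 y else 0) :=
            (sum_ite_subtype (fun y => cls y = some j) (fun y => C.transpose a.1 y)).symm
        _ = ∑ y, C.transpose a.1 y := by
            apply Finset.sum_congr rfl; intro y _
            by_cases hy : cls y = some j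
            · simp [hy]
            · rw [if_neg hy]
              exact (hblock a.1 y j a.2 hy).symm
        _ = Q := hall
    have heigB : (B.map (Complex.ofReal ·)).mulVec (fun a : S => v a.1)
        = (Q : ℂ) • (fun a : S => v a.1) := by
      funext a
      have hva := congrFun hv a.1
      calc (B.map (Complex.ofReal ·)).mulVec (fun a : S => v a.1) a
          = ∑ b : S, A a.1 b.1 * v b.1 := by
            unfold Matrix.mulVec dotProduct
            apply Finset.sum_congr rfl; intro b _
            rw [hA]
            simp [hBdef, Matrix.map_apply]
        _ = ∑ y, (if cls y = some j then A a.1 y * v y else 0) :=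
            (sum_ite_subtype (fun y => cls y = some j) (fun y => A a.1 y * v y)).symm
        _ = ∑ y, A a.1 y * v y := by
            apply Finset.sum_congr rfl; intro y _
            by_cases hy : cls y = some j
            · simp [hy]
            · simp [hy, hAblock a.1 y j a.2 hy]
        _ = (Q : ℂ) * v a.1 := hva
        _ = ((Q : ℂ) • (fun a : S => v a.1)) a := rfl
    exact perron_const_complex B Q hQ (hprim j) hrowB _ heigB ⟨x, hx⟩ ⟨y, hy⟩
  refine ⟨hMunit, fun v => ⟨fun hv => ?_, fun ⟨w, hw⟩ => ?_⟩⟩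
  · -- forward direction
    set w : Fin J → ℂ := fun j => if h : ∃ x, cls x = some j then v h.choose else 0
      with hwdef
    have hvw : ∀ (x : ι) (j : Fin J), cls x = some j → v x = w j := by
      intro x j hx
      have hex : ∃ x, cls x = some j := ⟨x, hx⟩
      rw [hwdef]
      simp only [dif_pos hex]
      exact hconst v hv j x hex.choose hx hex.choose_spec
    refine ⟨w, ?_⟩
    set V : ι → ℂ := fun x => (cls x).elim 0 w with hVdef
    have hVerg : ∀ (x : ι) (j : Fin J), cls x = some j → V x = w j := by
      intro x j hx; simp [hVdef, hx]
    have hVtr : ∀ x : ι, cls x = none → V x = 0 := by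
      intro x hx; simp [hVdef, hx]
    have hsupp : (fun y => if cls y = none then (v - V) y else 0) = v - V := by
      funext y
      rcases hy : cls y with _ | j
      · simp
      · rw [if_neg (by simp [hy])]
        have hz : (v - V) y = 0 := by
          simp only [Pi.sub_apply]
          rw [hvw y j hy, hVerg y j hy, sub_self]
        rw [hz]
    have hkey : M.mulVec (v - V) = A.mulVec V - (Q : ℂ) • V := by
      rw [hMD (v - V), hsupp, Matrix.mulVec_sub, hv, smul_sub]
      abel
    have hVform : v - V = -(M⁻¹.mulVec (((Q : ℂ) • (1 : Matrix ι ι ℂ) - A).mulVec V)) := by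
      have h1 : ((Q : ℂ) • (1 : Matrix ι ι ℂ) - A).mulVec V
          = (Q : ℂ) • V - A.mulVec V := by
        rw [Matrix.sub_mulVec, Matrix.smul_mulVec, Matrix.one_mulVec]
      have h2 : M⁻¹.mulVec (M.mulVec (v - V)) = v - V := by
        rw [Matrix.mulVec_mulVec, hMinvM, Matrix.one_mulVec]
      rw [h1, ← h2, hkey]
      rw [show ((Q : ℂ) • V - A.mulVec V) = -(A.mulVec V - (Q : ℂ) • V) by abel,
        Matrix.mulVec_neg, neg_neg]
    have := sub_eq_iff_eq_add.mp hVform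
    funext x
    have hx := congrFun this x
    simp only [Pi.sub_apply, Pi.neg_apply, Pi.add_apply] at hx ⊢
    linear_combination hx
  · -- reverse direction
    set V : ι → ℂ := fun x => (cls x).elim 0 w with hVdef
    have hVerg : ∀ (x : ι) (j : Fin J), cls x = some j → V x = w j := by
      intro x j hx; simp [hVdef, hx]
    set b : ι → ℂ := ((Q : ℂ) • (1 : Matrix ι ι ℂ) - A).mulVec V with hbdef
    set u : ι → ℂ := M⁻¹.mulVec b with hudef
    have hbV : b = (Q : ℂ) • V - A.mulVec V := by
      rw [hbdef, Matrix.sub_mulVec, Matrix.smul_mulVec, Matrix.one_mulVec]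
    have hberg : ∀ (x : ι) (j : Fin J), cls x = some j → b x = 0 := by
      intro x j hx
      have hsum : A.mulVec V x = (Q : ℂ) * w j := by
        calc A.mulVec V x = ∑ y, A x y * V y := rfl
          _ = ∑ y, A x y * w j := by
              apply Finset.sum_congr rfl; intro y _
              by_cases hy : cls y = some j
              · rw [hVerg y j hy]
              · rw [hAblock x y j hx hy, zero_mul, zero_mul]
          _ = (∑ y, A x y) * w j := by rw [Finset.sum_mul]
          _ = (Q : ℂ) * w j := by rw [hArow x j hx]
      rw [congrFun hbV x]
      simp only [Pi.sub_apply, Pi.smul_apply, smul_eq_mul]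
      rw [hsum, hVerg x j hx, sub_self]
    have hMu : M.mulVec u = b := by
      rw [hudef, Matrix.mulVec_mulVec, hMMinv, Matrix.one_mulVec]
    have huerg : ∀ (x : ι) (j : Fin J), cls x = some j → u x = 0 := by
      intro x j hx
      have h1 := hMerg u x j hx
      rw [congrFun hMu x, hberg x j hx] at h1
      exact (mul_eq_zero.mp h1.symm).resolve_left hQC
    have husupp : (fun y => if cls y = none then u y else 0) = u := by
      funext y
      rcases hy : cls y with _ | j
      · simp
      · rw [if_neg (by simp [hy]), huerg y j hy]
    have hb2 : b = (Q : ℂ) • u - A.mulVec u := by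
      rw [← hMu, hMD u, husupp]
    have hgoal : A.mulVec (V - u) = (Q : ℂ) • (V - u) := by
      rw [Matrix.mulVec_sub, smul_sub]
      have : (Q : ℂ) • V - A.mulVec V = (Q : ℂ) • u - A.mulVec u := by
        rw [← hbV, hb2]
      funext x
      have hx := congrFun this x
      simp only [Pi.sub_apply, Pi.smul_apply, smul_eq_mul] at hx ⊢
      linear_combination -hx
    rw [hw]
    exact hgoal
end

section
/- For the Thue–Morse substitution, the spectral hull is the segment 𝒦(τ) = { e_{00} + e_{11} + w(e_{01} + e_{10}) : −1 ≤ w ≤ 1 }: a vector v = (1, w, w, 1) (in basis e_{00},e_{01},e_{10},e_{11}) satisfies Cᵗ_τ v = 2v, strong semipositivity (the associated 2×2 matrix [[1,w],[w,1]] is positive semidefinite), and vᵗΣ̂(0) = 1, if and only if w is real with −1 ≤ w ≤ 1. -/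
open Kronecker
open scoped ComplexOrder

/-!
The transposed coincidence matrix acts by `(Cᵗv)(a, b) = v(a, b) + v(1 - a, 1 - b)`, so its
`2`-eigenvectors are the vectors constant on the ergodic classes `{00, 11}` and `{01, 10}`, and the
normalisation forces `v = (1, z, z, 1)`, with associated matrix `!![1, z; z, 1]`. That matrix is
Hermitian iff `z = w` is real, and then it equals
`(1 + w)/2 · (1,1)(1,1)ᵗ + (1 - w)/2 · (1,-1)(1,-1)ᵗ`: testing against `(1, ±1)` shows that both
weights must be nonnegative, and nonnegative weights give a positive semidefinite sum.
-/

namespace Matrix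

theorem of_ite_one_eq_fin_two {R : Type*} [One R] (z : R) :
    (of fun a b : Fin 2 => (fun p : Fin 2 × Fin 2 => if p.1 = p.2 then 1 else z) (a, b)) =
      !![1, z; z, 1] := by
  ext i j
  fin_cases i <;> fin_cases j <;> rfl

theorem posSemidef_one_ofReal_ofReal_one_iff (w : ℝ) :
    (!![1, (w : ℂ); w, 1]).PosSemidef ↔ -1 ≤ w ∧ w ≤ 1 := by
  constructor
  · intro h
    have hplus := h.dotProduct_mulVec_nonneg ![1, 1]
    have hminus := h.dotProduct_mulVec_nonneg ![1, -1]
    simp [mulVec, dotProduct, Fin.sum_univ_two] at hplus hminus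
    norm_cast at hplus hminus
    constructor <;> linarith
  · rintro ⟨h1, h2⟩
    have hdecomp : !![1, (w : ℂ); w, 1] =
        ((1 + w) / 2 : ℝ) • vecMulVec ![1, 1] (star ![1, 1]) +
          ((1 - w) / 2 : ℝ) • vecMulVec ![1, -1] (star ![1, -1]) := by
      ext i j
      fin_cases i <;> fin_cases j <;> simp [vecMulVec] <;> ring
    rw [hdecomp]
    exact ((posSemidef_vecMulVec_self_star _).smul (by linarith)).add
      ((posSemidef_vecMulVec_self_star _).smul (by linarith))

theorem posSemidef_one_self_self_one_iff (z : ℂ) :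
    (!![1, z; z, 1]).PosSemidef ↔ ∃ w : ℝ, -1 ≤ w ∧ w ≤ 1 ∧ z = w := by
  constructor
  · intro h
    have hconj : (starRingEnd ℂ) z = z := by
      simpa using congrFun (congrFun h.isHermitian 0) 1
    obtain ⟨w, rfl⟩ : ∃ w : ℝ, z = w := ⟨z.re, (Complex.conj_eq_iff_re.mp hconj).symm⟩
    obtain ⟨h1, h2⟩ := (posSemidef_one_ofReal_ofReal_one_iff w).mp h
    exact ⟨w, h1, h2, rfl⟩
  · rintro ⟨w, h1, h2, rfl⟩
    exact (posSemidef_one_ofReal_ofReal_one_iff w).mpr ⟨h1, h2⟩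

end Matrix

theorem thueMorse_coincidence_transpose_mulVec_eq_two_smul_iff {R : Type*} [CommRing R]
    (v : Fin 2 × Fin 2 → R) :
    ((1 : Matrix (Fin 2) (Fin 2) R) ⊗ₖ (1 : Matrix (Fin 2) (Fin 2) R) +
          !![(0 : R), 1; 1, 0] ⊗ₖ !![(0 : R), 1; 1, 0]).transpose.mulVec v = (2 : R) • v ↔
      v (1, 1) = v (0, 0) ∧ v (1, 0) = v (0, 1) := by
  simp only [funext_iff, Prod.forall, Fin.forall_fin_two]
  simp [Matrix.mulVec, dotProduct, Fintype.sum_prod_type, Fin.sum_univ_two, Matrix.one_apply,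
    two_mul]
  grind

theorem sum_mul_ite_eq_half_diag {K : Type*} [Field K] (v : Fin 2 × Fin 2 → K) :
    ∑ p : Fin 2 × Fin 2, v p * (if p.1 = p.2 then (1 / 2 : K) else 0) =
      v (0, 0) / 2 + v (1, 1) / 2 := by
  simp [Fintype.sum_prod_type, Fin.sum_univ_two, div_eq_mul_inv]

theorem thueMorse_eigenvector_normalized_iff {K : Type*} [Field K] [NeZero (2 : K)]
    (v : Fin 2 × Fin 2 → K) :
    (((1 : Matrix (Fin 2) (Fin 2) K) ⊗ₖ (1 : Matrix (Fin 2) (Fin 2) K) +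
          !![(0 : K), 1; 1, 0] ⊗ₖ !![(0 : K), 1; 1, 0]).transpose.mulVec v = (2 : K) • v ∧
        ∑ p : Fin 2 × Fin 2, v p * (if p.1 = p.2 then (1 / 2 : K) else 0) = 1) ↔
      ∃ z : K, v = fun p : Fin 2 × Fin 2 => if p.1 = p.2 then 1 else z := by
  rw [thueMorse_coincidence_transpose_mulVec_eq_two_smul_iff, sum_mul_ite_eq_half_diag]
  constructor
  · rintro ⟨⟨h11, h10⟩, htr⟩
    have h00 : v (0, 0) = 1 := by rwa [h11, add_halves] at htr
    refine ⟨v (0, 1), funext fun ⟨a, b⟩ => ?_⟩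
    fin_cases a <;> fin_cases b <;> simp [h00, h11, h10]
  · rintro ⟨z, rfl⟩
    exact ⟨⟨rfl, rfl⟩, add_halves 1⟩

/-- For the Thue–Morse substitution, with coincidence matrix `C_τ = R₀⊗R₀ + R₁⊗R₁`
(`R₀ = I₂`, `R₁` the swap matrix) and `Σ̂(0) = ½(1,0,0,1)ᵗ`: a vector `v ∈ ℂ⁴` satisfies
`Cᵗ_τ v = 2v`, strong semipositivity (the associated `2×2` matrix is positive semidefinite),
and `vᵗΣ̂(0) = 1`, iff `v = e₀₀ + e₁₁ + w(e₀₁ + e₁₀)` for some real `w` with `−1 ≤ w ≤ 1`;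
that is, the spectral hull is the segment `𝒦(τ) = {e₀₀ + e₁₁ + w(e₀₁+e₁₀) : −1 ≤ w ≤ 1}`. -/
theorem stmt19 (v : Fin 2 × Fin 2 → ℂ) :
    (((1 : Matrix (Fin 2) (Fin 2) ℂ) ⊗ₖ (1 : Matrix (Fin 2) (Fin 2) ℂ) +
          !![(0 : ℂ), 1; 1, 0] ⊗ₖ !![(0 : ℂ), 1; 1, 0]).transpose.mulVec v = (2 : ℂ) • v ∧
        (Matrix.of fun a b : Fin 2 => v (a, b)).PosSemidef ∧
        (∑ p : Fin 2 × Fin 2, v p * (if p.1 = p.2 then (1 / 2 : ℂ) else 0)) = 1) ↔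
      ∃ w : ℝ, -1 ≤ w ∧ w ≤ 1 ∧
        v = fun p : Fin 2 × Fin 2 => if p.1 = p.2 then 1 else (w : ℂ) := by
  constructor
  · rintro ⟨heig, hpsd, htr⟩
    obtain ⟨z, rfl⟩ := (thueMorse_eigenvector_normalized_iff v).mp ⟨heig, htr⟩
    rw [Matrix.of_ite_one_eq_fin_two] at hpsd
    obtain ⟨w, h1, h2, rfl⟩ := (Matrix.posSemidef_one_self_self_one_iff z).mp hpsd
    exact ⟨w, h1, h2, rfl⟩
  · rintro ⟨w, h1, h2, rfl⟩
    obtain ⟨heig, htr⟩ := (thueMorse_eigenvector_normalized_iff (K := ℂ) _).mpr ⟨w, rfl⟩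
    refine ⟨heig, ?_, htr⟩
    rw [Matrix.of_ite_one_eq_fin_two]
    exact (Matrix.posSemidef_one_ofReal_ofReal_one_iff w).mpr ⟨h1, h2⟩
end
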